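/- For every superset-closed adversary A over a finite set Π, the set consensus power of A equals the minimal hitting set size of A: setcon(A) = csize(A). -/

import Mathlib

variable {α : Type*} [DecidableEq α]

/-- The restriction `A|_P` of an adversary `A` to a set of processes `P`:
the live sets of `A` that are contained in `P`. -/
def restrict (A : Finset (Finset α)) (P : Finset α) : Finset (Finset α) :=
  A.filter fun S => S ⊆ P

/-- The set consensus power `setcon A` of an adversary `A`:
`setcon ∅ = 0` and, for `A ≠ ∅`,
`setcon A = 1 + max_{S ∈ A} min_{a ∈ S} setcon (A|_{S \ {a}})`. -/
def setcon (A : Finset (Finset α)) : ℕ :=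
  if A = ∅ then 0
  else 1 + A.attach.sup fun S =>
    (S.1.attach.image fun a => setcon (restrict A (S.1.erase a.1))).min.untopD 0
termination_by A.card
decreasing_by
  apply Finset.card_lt_card
  rw [Finset.ssubset_def]
  refine ⟨Finset.filter_subset _ _, fun hsub => ?_⟩
  have hmem := hsub S.2
  rw [restrict, Finset.mem_filter] at hmem
  exact Finset.notMem_erase a.1 S.1 (hmem.2 a.2)

/-- The restriction `A|_{P,Q}`: live sets of `A` contained in `P` that intersect `Q`. -/
def restrictTo (A : Finset (Finset α)) (P Q : Finset α) : Finset (Finset α) :=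
  (restrict A P).filter fun S => (S ∩ Q).Nonempty

/-- An adversary is fair if for all `P` and all `Q ⊆ P`,
`setcon (A|_{P,Q}) = min |Q| (setcon (A|_P))`. -/
def Fair (A : Finset (Finset α)) : Prop :=
  ∀ P Q : Finset α, Q ⊆ P →
    setcon (restrictTo A P Q) = min Q.card (setcon (restrict A P))

/-- `csize A`: the minimal cardinality of a hitting set of `A`, i.e. of a set
intersecting every live set of `A`. -/
noncomputable def csize (A : Finset (Finset α)) : ℕ :=
  sInf {k | ∃ H : Finset α, H.card = k ∧ ∀ S ∈ A, (H ∩ S).Nonempty}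

/-!
Both sides are compared on the restrictions `A|_P`, by strong induction on `P`. If `A|_P` is
nonempty, upward closure puts `P` itself into `A|_P`, and `csize (A|_P) = k ≥ 1`. For the upper
bound, every live set `S` meets a minimum hitting set `H`, say in `a`, and `H \ {a}` hits
`A|_{S \ {a}}`, so `S` has a child of power at most `k - 1`. For the lower bound take `S = P`:
adding `a` to a hitting set of `A|_{P \ {a}}` gives one of `A|_P`, so every child of `P` has
power at least `k - 1`.
-/

def IsHittingSet (A : Finset (Finset α)) (H : Finset α) : Prop :=
  ∀ S ∈ A, (H ∩ S).Nonempty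

section

variable {A : Finset (Finset α)} {H P Q S : Finset α} {a : α} {n : ℕ}

lemma mem_restrict : S ∈ restrict A P ↔ S ∈ A ∧ S ⊆ P :=
  Finset.mem_filter

lemma restrict_restrict_of_subset (h : Q ⊆ P) : restrict (restrict A P) Q = restrict A Q := by
  simp only [restrict, Finset.filter_filter]
  exact Finset.filter_congr fun S _ => and_iff_right_of_imp fun hSQ => hSQ.trans h

lemma setcon_empty : setcon (∅ : Finset (Finset α)) = 0 := by
  rw [setcon, if_pos rfl]

lemma setcon_le_of_forall_exists_lt
    (h : ∀ S ∈ A, ∃ a ∈ S, setcon (restrict A (S.erase a)) < n) : setcon A ≤ n := by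
  rw [setcon]
  split_ifs with hA
  · exact n.zero_le
  obtain ⟨S₀, hS₀⟩ := Finset.nonempty_iff_ne_empty.mpr hA
  obtain ⟨_, -, hn⟩ := h S₀ hS₀
  rw [add_comm, ← Nat.le_sub_iff_add_le (Nat.one_le_of_lt hn)]
  refine Finset.sup_le fun ⟨S, hS⟩ _ => WithTop.untopD_le ?_
  obtain ⟨a, ha, hlt⟩ := h S hS
  exact (Finset.min_le (Finset.mem_image_of_mem _ (Finset.mem_attach S ⟨a, ha⟩))).trans
    (WithTop.coe_le_coe.mpr (Nat.le_sub_one_of_lt hlt))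

lemma add_one_le_setcon_of_mem (hS : S ∈ A) (hSne : S.Nonempty)
    (h : ∀ a ∈ S, n ≤ setcon (restrict A (S.erase a))) : n + 1 ≤ setcon A := by
  rw [setcon, if_neg (Finset.ne_empty_of_mem hS), add_comm 1]
  refine Nat.succ_le_succ (le_trans ?_ (Finset.le_sup (Finset.mem_attach A ⟨S, hS⟩)))
  have hne : (S.attach.image fun a => setcon (restrict A (S.erase a.1))).Nonempty := by
    simpa using hSne
  rw [WithTop.le_untopD_iff fun h => absurd (Finset.min_eq_top.mp h) hne.ne_empty]
  exact Finset.le_min (by simpa using h)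

lemma csize_le_card (hH : IsHittingSet A H) : csize A ≤ H.card :=
  Nat.sInf_le ⟨H, rfl, hH⟩

lemma exists_isHittingSet_card_eq_csize (hH : IsHittingSet A H) :
    ∃ H', IsHittingSet A H' ∧ H'.card = csize A := by
  obtain ⟨H', hcard, hH'⟩ : csize A ∈ {k | ∃ H : Finset α, H.card = k ∧ IsHittingSet A H} :=
    Nat.sInf_mem ⟨H.card, H, rfl, hH⟩
  exact ⟨H', hH', hcard⟩

lemma csize_empty : csize (∅ : Finset (Finset α)) = 0 :=
  Nat.le_zero.mp (csize_le_card (H := ∅) fun _ h => absurd h (Finset.notMem_empty _))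

lemma isHittingSet_restrict_self (hne : ∀ S ∈ A, S.Nonempty) (P : Finset α) :
    IsHittingSet (restrict A P) P := fun S hS => by
  obtain ⟨hSA, hSP⟩ := mem_restrict.mp hS
  rw [Finset.inter_eq_right.mpr hSP]
  exact hne S hSA

lemma IsHittingSet.erase_restrict (hH : IsHittingSet A H) (ha : a ∉ Q) :
    IsHittingSet (restrict A Q) (H.erase a) := fun S hS => by
  obtain ⟨hSA, hSQ⟩ := mem_restrict.mp hS
  obtain ⟨b, hb⟩ := hH S hSA
  obtain ⟨hbH, hbS⟩ := Finset.mem_inter.mp hb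
  exact ⟨b, Finset.mem_inter.mpr ⟨Finset.mem_erase.mpr ⟨fun hba => ha (hba ▸ hSQ hbS), hbH⟩, hbS⟩⟩

lemma IsHittingSet.insert_of_restrict_erase (hH : IsHittingSet (restrict A (Q.erase a)) H) :
    IsHittingSet (restrict A Q) (insert a H) := fun S hS => by
  obtain ⟨hSA, hSQ⟩ := mem_restrict.mp hS
  by_cases haS : a ∈ S
  · exact ⟨a, Finset.mem_inter.mpr ⟨Finset.mem_insert_self a H, haS⟩⟩
  · have hS' : S ∈ restrict A (Q.erase a) :=
      mem_restrict.mpr ⟨hSA, Finset.subset_erase.mpr ⟨hSQ, haS⟩⟩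
    exact (hH S hS').mono (Finset.inter_subset_inter_right (Finset.subset_insert a H))

lemma csize_restrict_le_csize_restrict_erase_add_one (hne : ∀ S ∈ A, S.Nonempty) :
    csize (restrict A Q) ≤ csize (restrict A (Q.erase a)) + 1 := by
  obtain ⟨H, hH, hcard⟩ :=
    exists_isHittingSet_card_eq_csize (isHittingSet_restrict_self hne (Q.erase a))
  calc csize (restrict A Q) ≤ (insert a H).card := csize_le_card hH.insert_of_restrict_erase
    _ ≤ H.card + 1 := Finset.card_insert_le a H
    _ = csize (restrict A (Q.erase a)) + 1 := by rw [hcard]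

theorem setcon_restrict_eq_csize_restrict (hne : ∀ S ∈ A, S.Nonempty)
    (hA : IsUpperSet (A : Set (Finset α))) (P : Finset α) :
    setcon (restrict A P) = csize (restrict A P) := by
  induction P using Finset.strongInduction with
  | H P ih =>
  set B := restrict A P
  have hneB : ∀ S ∈ B, S.Nonempty := fun S hS => hne S (mem_restrict.mp hS).1
  rcases B.eq_empty_or_nonempty with hB | ⟨S₀, hS₀⟩
  · rw [hB, setcon_empty, csize_empty]
  have hPB : P ∈ B := by
    obtain ⟨hS₀A, hS₀P⟩ := mem_restrict.mp hS₀
    exact mem_restrict.mpr ⟨hA hS₀P hS₀A, subset_rfl⟩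
  have hchild : ∀ S ∈ B, ∀ a ∈ S,
      setcon (restrict B (S.erase a)) = csize (restrict B (S.erase a)) := by
    intro S hS a ha
    have hSP := (mem_restrict.mp hS).2
    rw [restrict_restrict_of_subset ((Finset.erase_subset a S).trans hSP)]
    exact ih _ ((Finset.erase_ssubset ha).trans_subset hSP)
  obtain ⟨H, hH, hcard⟩ := exists_isHittingSet_card_eq_csize (isHittingSet_restrict_self hne P)
  apply le_antisymm
  · refine setcon_le_of_forall_exists_lt fun S hS => ?_
    obtain ⟨a, ha⟩ := hH S hS
    obtain ⟨haH, haS⟩ := Finset.mem_inter.mp ha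
    refine ⟨a, haS, ?_⟩
    calc setcon (restrict B (S.erase a)) = csize (restrict B (S.erase a)) := hchild S hS a haS
      _ ≤ (H.erase a).card := csize_le_card (hH.erase_restrict (Finset.notMem_erase a S))
      _ < H.card := Finset.card_erase_lt_of_mem haH
      _ = csize B := hcard
  · have hBP : restrict B P = B := restrict_restrict_of_subset subset_rfl
    have hlower := add_one_le_setcon_of_mem hPB (hne P (mem_restrict.mp hPB).1)
      (n := csize B - 1) fun a ha => by
        rw [hchild P hPB a ha]
        have := csize_restrict_le_csize_restrict_erase_add_one hneB (Q := P) (a := a)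
        rw [hBP] at this
        omega
    omega

end

/-- For a superset-closed adversary, `setcon A = csize A`. -/
theorem setcon_eq_csize_of_supersetClosed [Fintype α] (A : Finset (Finset α))
    (hne : ∀ S ∈ A, S.Nonempty)
    (hsc : ∀ S ∈ A, ∀ S' : Finset α, S ⊆ S' → S' ∈ A) :
    setcon A = csize A := by
  have hunivA : restrict A Finset.univ = A :=
    Finset.filter_true_of_mem fun S _ => Finset.subset_univ S
  rw [← hunivA]
  exact setcon_restrict_eq_csize_restrict hne (fun S S' hSS' hS => hsc S hS S' hSS') _
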